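/- Let q be a prime power, m ≥ 2 a divisor of q+1, and N := (q+1)/m. Then the sum of m·k + j over all pairs of integers (j,k) with 1 ≤ j ≤ m−1 and 0 ≤ k ≤ q−1−N·j (the inner range being empty when q−1−N·j < 0) equals (m−1)(q−1)(2qm − m − q − 1)/12. -/
import Mathlib

private lemma icc_insert_top (a b : ℤ) (h : a ≤ b + 1) :
    Finset.Icc a (b + 1) = insert (b + 1) (Finset.Icc a b) := by
  ext x
  simp only [Finset.mem_Icc, Finset.mem_insert]
  omega

private lemma sum_lin (a b : ℤ) : ∀ n : ℕ,
    2 * ∑ k ∈ Finset.Icc (0 : ℤ) ((n : ℤ) - 1), (a * k + b)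
      = a * n * ((n : ℤ) - 1) + 2 * b * n := by
  intro n
  induction n with
  | zero => simp
  | succ n ih =>
    have h1 : ((n + 1 : ℕ) : ℤ) - 1 = ((n : ℤ) - 1) + 1 := by push_cast; ring
    rw [h1, icc_insert_top 0 ((n : ℤ) - 1) (by omega),
      Finset.sum_insert (by simp)]
    push_cast
    ring_nf
    ring_nf at ih
    linarith [ih]

private lemma sum_id (n : ℕ) :
    2 * ∑ j ∈ Finset.Icc (1 : ℤ) (n : ℤ), j = n * ((n : ℤ) + 1) := by
  induction n with
  | zero => simp
  | succ n ih =>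
    have h1 : ((n + 1 : ℕ) : ℤ) = (n : ℤ) + 1 := by push_cast; ring
    rw [h1, icc_insert_top 1 (n : ℤ) (by omega), Finset.sum_insert (by simp)]
    push_cast
    linarith [ih]

private lemma sum_sq (n : ℕ) :
    6 * ∑ j ∈ Finset.Icc (1 : ℤ) (n : ℤ), j ^ 2
      = n * ((n : ℤ) + 1) * (2 * n + 1) := by
  induction n with
  | zero => simp
  | succ n ih =>
    have h1 : ((n + 1 : ℕ) : ℤ) = (n : ℤ) + 1 := by push_cast; ring
    rw [h1, icc_insert_top 1 (n : ℤ) (by omega), Finset.sum_insert (by simp)]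
    push_cast
    ring_nf
    ring_nf at ih
    linarith [ih]

/-- For a prime power `q`, a divisor `m ≥ 2` of `q+1` with `N = (q+1)/m`,
the sum of `m·k + j` over all integer pairs `(j,k)` with `1 ≤ j ≤ m-1` and
`0 ≤ k ≤ q-1-N·j` equals `(m-1)(q-1)(2qm-m-q-1)/12` (stated multiplied through by 12). -/
theorem stmt_19 (q m N : ℕ) (hq : IsPrimePow q) (hm : 2 ≤ m) (hdvd : m ∣ q + 1)
    (hN : q + 1 = m * N) :
    12 * (∑ j ∈ Finset.Icc (1 : ℤ) ((m : ℤ) - 1),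
        ∑ k ∈ Finset.Icc (0 : ℤ) ((q : ℤ) - 1 - (N : ℤ) * j), ((m : ℤ) * k + j))
      = ((m : ℤ) - 1) * ((q : ℤ) - 1)
          * (2 * (q : ℤ) * (m : ℤ) - (m : ℤ) - (q : ℤ) - 1) := by
  have hq1 : 1 ≤ q := hq.one_lt.le
  have hN1 : 1 ≤ N := by
    rcases Nat.eq_zero_or_pos N with h | h
    · subst h; simp at hN
    · exact h
  have hqZ : (q : ℤ) + 1 = (m : ℤ) * N := by exact_mod_cast hN
  have key : ∀ j ∈ Finset.Icc (1 : ℤ) ((m : ℤ) - 1),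
      12 * ∑ k ∈ Finset.Icc (0 : ℤ) ((q : ℤ) - 1 - (N : ℤ) * j), ((m : ℤ) * k + j)
        = 6 * ((q : ℤ) - (N : ℤ) * j)
            * ((m : ℤ) * ((q : ℤ) - 1 - (N : ℤ) * j) + 2 * j) := by
    intro j hj
    rw [Finset.mem_Icc] at hj
    have hNZ : (1 : ℤ) ≤ (N : ℤ) := by exact_mod_cast hN1
    have hnn : (0 : ℤ) ≤ (q : ℤ) - (N : ℤ) * j := by
      have h2 : (N : ℤ) * j ≤ (N : ℤ) * ((m : ℤ) - 1) :=
        mul_le_mul_of_nonneg_left hj.2 (by positivity)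
      nlinarith [hqZ, hj.1, hj.2]
    obtain ⟨n, hn⟩ : ∃ n : ℕ, (n : ℤ) = (q : ℤ) - (N : ℤ) * j :=
      ⟨_, Int.toNat_of_nonneg hnn⟩
    have hs := sum_lin ((m : ℤ)) j n
    have harg : (q : ℤ) - 1 - (N : ℤ) * j = (n : ℤ) - 1 := by linarith
    rw [harg]
    linear_combination 6 * hs + (6 * ((m : ℤ) * ((n : ℤ) - 1) + 2 * j)) * hn
  rw [Finset.mul_sum, Finset.sum_congr rfl key]
  set M : ℕ := m - 1 with hM
  have hcard : ((m : ℤ) - 1) = ((M : ℕ) : ℤ) := by omega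
  have h1 := sum_id M
  have h2 := sum_sq M
  have hexp : ∀ j ∈ Finset.Icc (1 : ℤ) ((M : ℤ)),
      6 * ((q : ℤ) - (N : ℤ) * j)
          * ((m : ℤ) * ((q : ℤ) - 1 - (N : ℤ) * j) + 2 * j)
        = 6 * (m : ℤ) * q * ((q : ℤ) - 1)
          + (6 * ((m : ℤ) * N + 2 * q - 2 * (m : ℤ) * N * q)) * j
          + (6 * (N : ℤ) * ((m : ℤ) * N - 2)) * j ^ 2 := by
    intro j _; ring
  rw [hcard, Finset.sum_congr rfl hexp]
  rw [Finset.sum_add_distrib, Finset.sum_add_distrib, Finset.sum_const,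
    ← Finset.mul_sum, ← Finset.mul_sum]
  have hcardIcc : (Finset.Icc (1 : ℤ) ((M : ℤ))).card = M := by
    rw [Int.card_Icc]; omega
  rw [hcardIcc, nsmul_eq_mul]
  have hMZ : ((M : ℕ) : ℤ) = (m : ℤ) - 1 := by omega
  have hq' : (q : ℤ) = (m : ℤ) * N - 1 := by linarith [hqZ]
  rw [hq']
  rw [hMZ] at h1 h2 ⊢
  linear_combination (3 * ((m : ℤ) * N + 2 * ((m : ℤ) * N - 1)
      - 2 * (m : ℤ) * N * ((m : ℤ) * N - 1))) * h1
    + ((N : ℤ) * ((m : ℤ) * N - 2)) * h2
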